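/- Let Z, X be real random variables with Var(ZX) > 0 and finite fourth moments. Define ω(z) = Cov( X·1{Z ≥ z}, ZX ) / Var(ZX). Then ∫ ω(z) dz = 1, where the integral is over the support of Z. (The key identity is ∫ X·1{Z ≥ z} dz = XZ when Z ≥ 0, or more generally the weight function integrates to one by Fubini.) -/

import Mathlib

/-!
Fubini with the layer-cake identity `∫₀ᴹ 1{Z ≥ z} dz = Z` (valid as `0 ≤ Z ≤ M`) gives
`∫₀ᴹ Cov(X·1{Z ≥ z}, ZX) dz = Cov(XZ, ZX) = Var(ZX)`, so the weights integrate to one.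
Fourth moments of `X` and boundedness of `Z` make every product integrable.
-/

open MeasureTheory

/-- Population covariance of two real random variables. -/
noncomputable def covar {Ω : Type*} [MeasurableSpace Ω] (μ : Measure Ω)
    (f h : Ω → ℝ) : ℝ :=
  (∫ ω, f ω * h ω ∂μ) - (∫ ω, f ω ∂μ) * (∫ ω, h ω ∂μ)

open Set

lemma memLp_four_of_integrable_pow_four {Ω : Type*} [MeasurableSpace Ω] {μ : Measure Ω}
    {X : Ω → ℝ} (hX : AEStronglyMeasurable X μ) (h4 : Integrable (fun ω => X ω ^ 4) μ) :
    MemLp X 4 μ := by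
  rw [← memLp_norm_rpow_iff (q := 4) hX four_ne_zero ENNReal.ofNat_ne_top,
    ENNReal.div_self four_ne_zero ENNReal.ofNat_ne_top, memLp_one_iff_integrable]
  simpa [Even.pow_abs ⟨2, rfl⟩] using h4

lemma setIntegral_Icc_indicator_Ici_one {a b t : ℝ} (ht : t ∈ Icc a b) :
    ∫ z in Icc a b, (Ici z).indicator (fun _ => (1 : ℝ)) t = t - a := by
  have hind : (fun z => (Ici z).indicator (fun _ => (1 : ℝ)) t) = (Iic t).indicator 1 := by
    ext z
    simp [indicator_apply]
  have hinter : Iic t ∩ Icc a b = Icc a t := by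
    ext z
    simp only [mem_inter_iff, mem_Iic, mem_Icc]
    constructor
    · rintro ⟨hzt, haz, -⟩
      exact ⟨haz, hzt⟩
    · rintro ⟨haz, hzt⟩
      exact ⟨hzt, haz, hzt.trans ht.2⟩
  rw [hind, integral_indicator_one measurableSet_Iic, measureReal_restrict_apply measurableSet_Iic,
    hinter, Real.volume_real_Icc_of_le ht.1]

lemma measurable_indicator_Ici_comp_prod {Ω : Type*} [MeasurableSpace Ω] {Z : Ω → ℝ}
    (hZ : Measurable Z) :
    Measurable (fun p : ℝ × Ω => (Ici p.1).indicator (fun _ => (1 : ℝ)) (Z p.2)) := by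
  have hset : MeasurableSet {p : ℝ × Ω | p.1 ≤ Z p.2} :=
    measurableSet_le measurable_fst (hZ.comp measurable_snd)
  convert (measurable_const (a := (1 : ℝ))).indicator hset using 1
  ext p
  by_cases h : p.1 ≤ Z p.2 <;> simp [h]

section Fubini

variable {Ω : Type*} [MeasurableSpace Ω] {μ : Measure Ω} {Y Z : Ω → ℝ} {a b : ℝ}

lemma integrable_mul_indicator_Ici_prod (hY : Integrable Y μ) (hZ : Measurable Z) :
    Integrable (fun p : ℝ × Ω => Y p.2 * (Ici p.1).indicator (fun _ => (1 : ℝ)) (Z p.2))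
      ((volume.restrict (Icc a b)).prod μ) := by
  have hYprod : Integrable (fun p : ℝ × Ω => Y p.2) ((volume.restrict (Icc a b)).prod μ) := by
    simpa using (integrable_const (1 : ℝ)).mul_prod hY
  refine hYprod.mono ((hYprod.aestronglyMeasurable.mul
    (measurable_indicator_Ici_comp_prod hZ).aestronglyMeasurable)) (ae_of_all _ fun p => ?_)
  rw [norm_mul]
  refine mul_le_of_le_one_right (norm_nonneg _) ?_
  by_cases h : p.1 ≤ Z p.2 <;> simp [h]

lemma setIntegral_Icc_integral_mul_indicator_Ici [SFinite μ] (hY : Integrable Y μ)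
    (hZ : Measurable Z) (hsupp : ∀ᵐ ω ∂μ, Z ω ∈ Icc a b) :
    ∫ z in Icc a b, ∫ ω, Y ω * (Ici z).indicator (fun _ => (1 : ℝ)) (Z ω) ∂μ
      = ∫ ω, Y ω * (Z ω - a) ∂μ := by
  rw [integral_integral_swap (integrable_mul_indicator_Ici_prod hY hZ)]
  refine integral_congr_ae ?_
  filter_upwards [hsupp] with ω hω
  rw [integral_const_mul, setIntegral_Icc_indicator_Ici_one hω]

lemma integrableOn_integral_mul_indicator_Ici [SFinite μ] (hY : Integrable Y μ)
    (hZ : Measurable Z) :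
    IntegrableOn (fun z => ∫ ω, Y ω * (Ici z).indicator (fun _ => (1 : ℝ)) (Z ω) ∂μ)
      (Icc a b) :=
  (integrable_mul_indicator_Ici_prod hY hZ).integral_prod_left

theorem setIntegral_Icc_covar_mul_indicator_Ici [SFinite μ] {X W : Ω → ℝ}
    (hX : Integrable X μ) (hXW : Integrable (fun ω => X ω * W ω) μ) (hZ : Measurable Z)
    (hsupp : ∀ᵐ ω ∂μ, Z ω ∈ Icc a b) :
    ∫ z in Icc a b, covar μ (fun ω => X ω * (Ici z).indicator (fun _ => (1 : ℝ)) (Z ω)) W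
      = covar μ (fun ω => X ω * (Z ω - a)) W := by
  simp only [covar, mul_right_comm (X _) _ (W _)]
  rw [integral_sub (integrableOn_integral_mul_indicator_Ici hXW hZ)
      ((integrableOn_integral_mul_indicator_Ici hX hZ).mul_const _), integral_mul_const,
    setIntegral_Icc_integral_mul_indicator_Ici hXW hZ hsupp,
    setIntegral_Icc_integral_mul_indicator_Ici hX hZ hsupp]

end Fubini

theorem statement4_general
    {Ω : Type*} [MeasurableSpace Ω] (μ : Measure Ω) [IsProbabilityMeasure μ]
    (X Z : Ω → ℝ) (hX : Measurable X) (hZ : Measurable Z)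
    (M : ℝ)
    (hsupp : ∀ᵐ ω ∂μ, Z ω ∈ Set.Icc (0 : ℝ) M)
    (hm4X : Integrable (fun ω => X ω ^ 4) μ)
    (hvar : 0 < covar μ (fun ω => Z ω * X ω) (fun ω => Z ω * X ω)) :
    (∫ z in Set.Icc (0 : ℝ) M,
        covar μ (fun ω => X ω * (Set.Ici z).indicator (fun _ => (1 : ℝ)) (Z ω))
            (fun ω => Z ω * X ω)
          / covar μ (fun ω => Z ω * X ω) (fun ω => Z ω * X ω)) = 1 := by
  have hX4 : MemLp X 4 μ := memLp_four_of_integrable_pow_four hX.aestronglyMeasurable hm4X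
  have hX1 : Integrable X μ := memLp_one_iff_integrable.1 (hX4.mono_exponent (by norm_num))
  have hX2 : Integrable (fun ω => X ω ^ 2) μ := (hX4.mono_exponent (by norm_num)).integrable_sq
  have hZbdd : ∀ᵐ ω ∂μ, ‖Z ω‖ ≤ M := by
    filter_upwards [hsupp] with ω hω
    rw [Real.norm_of_nonneg hω.1]
    exact hω.2
  have hXZX : Integrable (fun ω => X ω * (Z ω * X ω)) μ := by
    refine (hX2.bdd_mul hZ.aestronglyMeasurable hZbdd).congr (ae_of_all _ fun ω => ?_)
    ring
  rw [integral_div, setIntegral_Icc_covar_mul_indicator_Ici hX1 hXZX hZ hsupp]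
  simp only [sub_zero, mul_comm (X _) (Z _)]
  exact div_self hvar.ne'

/-- With `Z` supported on `[0, M]`, `Var(ZX) > 0` and finite fourth
moments, the weight function `ω(z) = Cov(X·1{Z ≥ z}, ZX)/Var(ZX)` integrates to one
over the support of `Z`. -/
theorem statement4
    {Ω : Type*} [MeasurableSpace Ω] (μ : Measure Ω) [IsProbabilityMeasure μ]
    (X Z : Ω → ℝ) (hX : Measurable X) (hZ : Measurable Z)
    (M : ℝ) (hM : 0 < M)
    (hsupp : ∀ᵐ ω ∂μ, Z ω ∈ Set.Icc (0 : ℝ) M)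
    (hm4X : Integrable (fun ω => X ω ^ 4) μ)
    (hm4Z : Integrable (fun ω => Z ω ^ 4) μ)
    (hvar : 0 < covar μ (fun ω => Z ω * X ω) (fun ω => Z ω * X ω))
    (hfub : IntegrableOn (fun z =>
      covar μ (fun ω => X ω * (Set.Ici z).indicator (fun _ => (1 : ℝ)) (Z ω))
        (fun ω => Z ω * X ω)) (Set.Icc (0 : ℝ) M) volume) :
    (∫ z in Set.Icc (0 : ℝ) M,
        covar μ (fun ω => X ω * (Set.Ici z).indicator (fun _ => (1 : ℝ)) (Z ω))
            (fun ω => Z ω * X ω)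
          / covar μ (fun ω => Z ω * X ω) (fun ω => Z ω * X ω)) = 1 :=
  statement4_general μ X Z hX hZ M hsupp hm4X hvar
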